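/- arXiv:1306.5417 — 2 statements merged into one kernel-verified Lean document; each statement's English description precedes it below -/
import Mathlib

section
/- Let $n \geq 1$, let $\lambda_1,\dots,\lambda_n > 0$ with $\bar{\lambda} = \max_i \lambda_i$ and $\underline{\lambda} = \min_i \lambda_i$, and assume $2\underline{\lambda} < n$. Let $Z_1,\dots,Z_N$ be i.i.d. copies of the estimator $Z = \mathbf{1}_{\{\sum_{i=1}^n Y_i \leq 1\}} \cdot \prod_{i=1}^n \frac{\lambda_i e^{-\lambda_i Y_i}}{n e^{-n Y_i}}$ (with $Y_1,\dots,Y_n$ i.i.d. $\mathrm{Exp}(n)$), and set $\hat{\ell} = \frac{1}{N}\sum_{j=1}^N Z_j$. Then the relative error $RE = \sqrt{\mathrm{Var}(\hat{\ell})}/\mathbb{E}[\hat{\ell}]$ satisfies $RE \leq \sqrt{\frac{\sqrt{n}\, e^{2(\bar{\lambda} - \underline{\lambda}) + 1}}{N}}$. -/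
open MeasureTheory ProbabilityTheory Real Set
open scoped ENNReal Nat

/-!
Under the sampling law `Exp(n)^⊗n` the density `nⁿ e^{-n ∑ yᵢ}` is cancelled by the tilt
`e^{n ∑ yᵢ}`, so `∫_Δ e^{n ∑ yᵢ} = nⁿ / n!` over the solid simplex `Δ = {y ≥ 0, ∑ yᵢ ≤ 1}`.
On `Δ` the estimator equals `c e^{∑ (n - λᵢ) yᵢ}` with `c = ∏ λᵢ / n`; it is at least
`c e^{-λ̄} e^{n ∑ yᵢ}`, and since `2 λ_min ≤ n` its square is at most
`c² e^{n - 2 λ_min} e^{n ∑ yᵢ}`. Hence `E[Z²] ≤ e^{n - 2 λ_min + 2 λ̄} (n! / nⁿ) E[Z]²`, and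
Stirling's bound `n! ≤ e √n (n / e)ⁿ` turns the factor into `√n e^{2 (λ̄ - λ_min) + 1}`.
Averaging `N` i.i.d. copies keeps the mean and divides the variance by `N`.
-/

theorem factorial_le_exp_one_mul_sqrt_mul_pow {n : ℕ} (hn : n ≠ 0) :
    (n ! : ℝ) ≤ exp 1 * √n * (n / exp 1) ^ n := by
  have hseq : Stirling.stirlingSeq n ≤ exp 1 / √2 := by
    obtain ⟨m, rfl⟩ := Nat.exists_eq_succ_of_ne_zero hn
    simpa [Stirling.stirlingSeq_one] using Stirling.stirlingSeq'_antitone (Nat.zero_le m)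
  have hfac : (n ! : ℝ) = Stirling.stirlingSeq n * (√2 * √n * (n / exp 1) ^ n) := by
    have : (0 : ℝ) < n := by positivity
    rw [Stirling.stirlingSeq, ← sqrt_mul zero_le_two]
    field_simp
  calc (n ! : ℝ) ≤ exp 1 / √2 * (√2 * √n * (n / exp 1) ^ n) := by
        rw [hfac]; gcongr
    _ = exp 1 * √n * (n / exp 1) ^ n := by field_simp

def solidSimplex (k : ℕ) (t : ℝ) : Set (Fin k → ℝ) := {y | 0 ≤ y ∧ ∑ i, y i ≤ t}

theorem isClosed_solidSimplex (k : ℕ) (t : ℝ) : IsClosed (solidSimplex k t) :=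
  (isClosed_le continuous_const continuous_id).inter
    (isClosed_le (continuous_finsetSum _ fun i _ => continuous_apply i) continuous_const)

theorem isCompact_solidSimplex (k : ℕ) (t : ℝ) : IsCompact (solidSimplex k t) :=
  isCompact_Icc.of_isClosed_subset (isClosed_solidSimplex k t) fun _ hy =>
    ⟨hy.1, fun i => (Finset.single_le_sum (fun j _ => hy.1 j) (Finset.mem_univ i)).trans hy.2⟩

theorem measurableSet_solidSimplex (k : ℕ) (t : ℝ) : MeasurableSet (solidSimplex k t) :=
  (isClosed_solidSimplex k t).measurableSet

theorem Continuous.integrableOn_solidSimplex {k : ℕ} {μ : Measure (Fin k → ℝ)}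
    [IsFiniteMeasureOnCompacts μ] {f : (Fin k → ℝ) → ℝ} (hf : Continuous f) (t : ℝ) :
    IntegrableOn f (solidSimplex k t) μ :=
  hf.continuousOn.integrableOn_compact (isCompact_solidSimplex k t)

theorem Fin.cons_mem_solidSimplex_iff {k : ℕ} {t x : ℝ} {z : Fin k → ℝ} :
    (Fin.cons x z : Fin (k + 1) → ℝ) ∈ solidSimplex (k + 1) t ↔
      0 ≤ x ∧ z ∈ solidSimplex k (t - x) := by
  simp [solidSimplex, Pi.le_def, Fin.forall_fin_succ, Fin.sum_cons, le_sub_iff_add_le',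
    and_assoc]

theorem lintegral_pi_fin_succ {α : Type*} [MeasurableSpace α] (μ : Measure α) [SigmaFinite μ]
    {k : ℕ} {f : (Fin (k + 1) → α) → ℝ≥0∞} (hf : Measurable f) :
    ∫⁻ y, f y ∂Measure.pi (fun _ => μ) =
      ∫⁻ x, ∫⁻ z, f (Fin.cons x z) ∂Measure.pi (fun _ => μ) ∂μ := by
  have e := measurePreserving_piFinSuccAbove (fun _ : Fin (k + 1) => μ) 0
  rw [← e.symm.lintegral_comp hf]
  refine (lintegral_prod _ (hf.comp (MeasurableEquiv.measurable _)).aemeasurable).trans ?_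
  simp [MeasurableEquiv.piFinSuccAbove, Fin.insertNthEquiv]

theorem lintegral_expMeasure {r : ℝ} {f : ℝ → ℝ≥0∞} (hf : Measurable f) :
    ∫⁻ x, f x ∂expMeasure r = ∫⁻ x, exponentialPDF r x * f x :=
  lintegral_withDensity_eq_lintegral_mul _ (measurable_exponentialPDFReal r).ennreal_ofReal hf

theorem ae_nonneg_pi_expMeasure {r : ℝ} (hr : 0 < r) (k : ℕ) :
    ∀ᵐ y ∂Measure.pi (fun _ : Fin k => expMeasure r), 0 ≤ y := by
  have := isProbabilityMeasure_expMeasure hr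
  have h : ∀ᵐ x ∂expMeasure r, 0 ≤ x := by
    simp only [ae_iff, not_le]
    change expMeasure r (Iio 0) = 0
    rw [expMeasure, gammaMeasure, withDensity_apply _ measurableSet_Iio]
    exact lintegral_gammaPDF_of_nonpos le_rfl
  exact ae_all_iff.2 fun i => Measure.tendsto_eval_ae_ae.eventually h

theorem exponentialPDF_mul_ofReal_exp_mul {r x : ℝ} (hr : 0 ≤ r) (hx : 0 ≤ x) (a : ℝ) :
    exponentialPDF r x * ENNReal.ofReal (exp (r * x) * a) = ENNReal.ofReal (r * a) := by
  rw [exponentialPDF_of_nonneg hx, ← ENNReal.ofReal_mul (by positivity), exp_neg]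
  field_simp

theorem integral_sub_pow_div_factorial (k : ℕ) (t : ℝ) :
    ∫ x in (0 : ℝ)..t, (t - x) ^ k / k ! = t ^ (k + 1) / (k + 1)! := by
  rw [intervalIntegral.integral_div, intervalIntegral.integral_comp_sub_left (fun x => x ^ k),
    sub_self, sub_zero, integral_pow, Nat.factorial_succ]
  push_cast
  field_simp
  ring

theorem indicator_solidSimplex_cons {k : ℕ} {r t x : ℝ} (hx : 0 ≤ x) (z : Fin k → ℝ) :
    (solidSimplex (k + 1) t).indicator (fun y => ENNReal.ofReal (exp (r * ∑ i, y i)))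
        (Fin.cons x z) =
      ENNReal.ofReal (exp (r * x)) *
        (solidSimplex k (t - x)).indicator (fun y => ENNReal.ofReal (exp (r * ∑ i, y i))) z := by
  by_cases hz : z ∈ solidSimplex k (t - x)
  · rw [indicator_of_mem (Fin.cons_mem_solidSimplex_iff.2 ⟨hx, hz⟩), indicator_of_mem hz,
      Fin.sum_cons, mul_add, exp_add, ENNReal.ofReal_mul (exp_pos _).le]
  · rw [indicator_of_notMem (fun h => hz (Fin.cons_mem_solidSimplex_iff.1 h).2),
      indicator_of_notMem hz, mul_zero]

theorem lintegral_Icc_mul_pow_sub {r t : ℝ} (hr : 0 ≤ r) (ht : 0 ≤ t) (k : ℕ) :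
    ∫⁻ x in Icc 0 t, ENNReal.ofReal (r * ((r * (t - x)) ^ k / k !)) =
      ENNReal.ofReal ((r * t) ^ (k + 1) / (k + 1)!) := by
  have hnonneg : 0 ≤ᵐ[volume.restrict (Icc 0 t)] fun x => r * ((r * (t - x)) ^ k / k !) := by
    filter_upwards [ae_restrict_mem measurableSet_Icc] with x hx
    have : 0 ≤ t - x := sub_nonneg.2 hx.2
    positivity
  rw [← ofReal_integral_eq_lintegral_ofReal (Continuous.integrableOn_Icc (by fun_prop)) hnonneg,
    integral_Icc_eq_integral_Ioc, ← intervalIntegral.integral_of_le ht]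
  simp_rw [mul_pow, mul_div_assoc, intervalIntegral.integral_const_mul,
    integral_sub_pow_div_factorial]
  ring_nf

theorem lintegral_exp_sum_solidSimplex {r : ℝ} (hr : 0 < r) (k : ℕ) {t : ℝ} (ht : 0 ≤ t) :
    ∫⁻ y in solidSimplex k t, ENNReal.ofReal (exp (r * ∑ i, y i))
        ∂Measure.pi (fun _ => expMeasure r) = ENNReal.ofReal ((r * t) ^ k / k !) := by
  have := isProbabilityMeasure_expMeasure hr
  induction k generalizing t with
  | zero => simp [solidSimplex, ht]
  | succ k ih =>
    have hG : Measurable fun y : Fin k → ℝ => ENNReal.ofReal (exp (r * ∑ i, y i)) := by fun_prop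
    have hslice x : ∫⁻ z, (solidSimplex (k + 1) t).indicator
          (fun y => ENNReal.ofReal (exp (r * ∑ i, y i))) (Fin.cons x z)
            ∂Measure.pi (fun _ => expMeasure r) =
        (Icc 0 t).indicator
          (fun x => ENNReal.ofReal (exp (r * x) * ((r * (t - x)) ^ k / k !))) x := by
      by_cases hx : x ∈ Icc 0 t
      · simp_rw [indicator_of_mem hx, indicator_solidSimplex_cons hx.1]
        rw [lintegral_const_mul _ (hG.indicator (measurableSet_solidSimplex _ _)),
          lintegral_indicator (measurableSet_solidSimplex _ _), ih (sub_nonneg.2 hx.2),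
          ENNReal.ofReal_mul (exp_pos _).le]
      · have hempty : ∀ z, Fin.cons x z ∉ solidSimplex (k + 1) t := by
          intro z hz
          obtain ⟨hx0, hz0, hzt⟩ := Fin.cons_mem_solidSimplex_iff.1 hz
          exact hx ⟨hx0, by linarith [Finset.sum_nonneg fun i (_ : i ∈ Finset.univ) => hz0 i]⟩
        simp [indicator_of_notMem hx, indicator_of_notMem (hempty _)]
    have hdens x : exponentialPDF r x *
        (Icc 0 t).indicator (fun x => ENNReal.ofReal (exp (r * x) * ((r * (t - x)) ^ k / k !))) x =
        (Icc 0 t).indicator (fun x => ENNReal.ofReal (r * ((r * (t - x)) ^ k / k !))) x := by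
      by_cases hx : x ∈ Icc 0 t
      · rw [indicator_of_mem hx, indicator_of_mem hx, exponentialPDF_mul_ofReal_exp_mul hr.le hx.1]
      · simp [indicator_of_notMem hx]
    rw [← lintegral_indicator (measurableSet_solidSimplex _ _), lintegral_pi_fin_succ _
      ((by fun_prop : Measurable _).indicator (measurableSet_solidSimplex _ _))]
    simp_rw [hslice]
    rw [lintegral_expMeasure ((by fun_prop : Measurable _).indicator measurableSet_Icc)]
    simp_rw [hdens]
    rw [lintegral_indicator measurableSet_Icc, lintegral_Icc_mul_pow_sub hr.le ht]

theorem setIntegral_exp_sum_solidSimplex {r : ℝ} (hr : 0 < r) (k : ℕ) {t : ℝ} (ht : 0 ≤ t) :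
    ∫ y in solidSimplex k t, exp (r * ∑ i, y i) ∂Measure.pi (fun _ => expMeasure r) =
      (r * t) ^ k / k ! := by
  rw [integral_eq_lintegral_of_nonneg_ae (ae_of_all _ fun _ => (exp_pos _).le)
    (by fun_prop : Measurable fun y : Fin k → ℝ => exp (r * ∑ i, y i)).aestronglyMeasurable,
    lintegral_exp_sum_solidSimplex hr k ht, ENNReal.toReal_ofReal (by positivity)]

section Estimator

variable {n : ℕ} (lam : Fin n → ℝ) (r : ℝ)

noncomputable def importanceEstimator (y : Fin n → ℝ) : ℝ :=
  (if ∑ i, y i ≤ 1 then 1 else 0) *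
    ∏ i, (lam i * exp (-(lam i) * y i)) / (r * exp (-r * y i))

theorem measurable_importanceEstimator : Measurable (importanceEstimator lam r) := by
  unfold importanceEstimator
  refine Measurable.mul ?_ (by fun_prop)
  exact Measurable.ite (measurableSet_le (by fun_prop) measurable_const) measurable_const
    measurable_const

theorem importanceEstimator_eq_indicator {y : Fin n → ℝ} (hy : 0 ≤ y) :
    importanceEstimator lam r y = (solidSimplex n 1).indicator
      (fun y => (∏ i, lam i / r) * exp (∑ i, (r - lam i) * y i)) y := by
  by_cases hs : ∑ i, y i ≤ 1
  · rw [importanceEstimator, if_pos hs, one_mul,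
      indicator_of_mem (show y ∈ solidSimplex n 1 from ⟨hy, hs⟩), exp_sum,
      ← Finset.prod_mul_distrib]
    refine Finset.prod_congr rfl fun i _ => ?_
    rw [mul_div_mul_comm, ← exp_sub]
    ring_nf
  · rw [importanceEstimator, if_neg hs, zero_mul, indicator_of_notMem fun h => hs h.2]

variable {lam r}

theorem neg_add_mul_sum_le_sum_sub_mul {lamBar : ℝ} (hBar : ∀ i, lam i ≤ lamBar)
    (hBar0 : 0 ≤ lamBar) {y : Fin n → ℝ} (hy : y ∈ solidSimplex n 1) :
    -lamBar + r * ∑ i, y i ≤ ∑ i, (r - lam i) * y i := by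
  have h : ∑ i, lam i * y i ≤ lamBar * ∑ i, y i := by
    rw [Finset.mul_sum]
    exact Finset.sum_le_sum fun i _ => mul_le_mul_of_nonneg_right (hBar i) (hy.1 i)
  have h1 : lamBar * ∑ i, y i ≤ lamBar := mul_le_of_le_one_right hBar0 hy.2
  simp only [sub_mul, Finset.sum_sub_distrib, ← Finset.mul_sum]
  linarith

theorem two_mul_sum_sub_mul_le {lamMin : ℝ} (hMin : ∀ i, lamMin ≤ lam i)
    (h2 : 2 * lamMin ≤ r) {y : Fin n → ℝ} (hy : y ∈ solidSimplex n 1) :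
    2 * ∑ i, (r - lam i) * y i ≤ r - 2 * lamMin + r * ∑ i, y i := by
  have h : lamMin * ∑ i, y i ≤ ∑ i, lam i * y i := by
    rw [Finset.mul_sum]
    exact Finset.sum_le_sum fun i _ => mul_le_mul_of_nonneg_right (hMin i) (hy.1 i)
  have h1 : (r - 2 * lamMin) * ∑ i, y i ≤ r - 2 * lamMin :=
    mul_le_of_le_one_right (by linarith) hy.2
  simp only [sub_mul, Finset.sum_sub_distrib, ← Finset.mul_sum]
  linarith

end Estimator

section Moments

variable {n : ℕ} {lam : Fin n → ℝ} {r : ℝ}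

theorem importanceEstimator_ae_eq (hr : 0 < r) :
    importanceEstimator lam r =ᵐ[Measure.pi fun _ : Fin n => expMeasure r]
      (solidSimplex n 1).indicator (fun y => (∏ i, lam i / r) * exp (∑ i, (r - lam i) * y i)) :=
  (ae_nonneg_pi_expMeasure hr n).mono fun _ hy => importanceEstimator_eq_indicator lam r hy

theorem sq_importanceEstimator_ae_eq (hr : 0 < r) :
    (fun y => importanceEstimator lam r y ^ 2) =ᵐ[Measure.pi fun _ : Fin n => expMeasure r]
      (solidSimplex n 1).indicator
        (fun y => ((∏ i, lam i / r) * exp (∑ i, (r - lam i) * y i)) ^ 2) :=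
  (importanceEstimator_ae_eq (lam := lam) hr).mono fun y hy => by
    by_cases h : y ∈ solidSimplex n 1 <;> simp only [hy, h, indicator_of_mem, indicator_of_notMem,
      not_false_eq_true, zero_pow two_ne_zero]

theorem memLp_importanceEstimator (hr : 0 < r) :
    MemLp (importanceEstimator lam r) 2 (Measure.pi fun _ : Fin n => expMeasure r) := by
  have := isProbabilityMeasure_expMeasure hr
  rw [memLp_two_iff_integrable_sq (measurable_importanceEstimator lam r).aestronglyMeasurable,
    integrable_congr (sq_importanceEstimator_ae_eq hr),
    integrable_indicator_iff (measurableSet_solidSimplex n 1)]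
  exact Continuous.integrableOn_solidSimplex (by fun_prop) 1

theorem integral_importanceEstimator_ge (hr : 0 < r) (hlam : ∀ i, 0 ≤ lam i) {lamBar : ℝ}
    (hBar : ∀ i, lam i ≤ lamBar) (hBar0 : 0 ≤ lamBar) :
    (∏ i, lam i / r) * exp (-lamBar) * (r ^ n / n !) ≤
      ∫ y, importanceEstimator lam r y ∂Measure.pi (fun _ => expMeasure r) := by
  have := isProbabilityMeasure_expMeasure hr
  have hc : 0 ≤ ∏ i, lam i / r := Finset.prod_nonneg fun i _ => div_nonneg (hlam i) hr.le
  rw [integral_congr_ae (importanceEstimator_ae_eq hr),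
    integral_indicator (measurableSet_solidSimplex n 1)]
  calc (∏ i, lam i / r) * exp (-lamBar) * (r ^ n / n !)
      = ∫ y in solidSimplex n 1, (∏ i, lam i / r) * exp (-lamBar) * exp (r * ∑ i, y i)
          ∂Measure.pi (fun _ => expMeasure r) := by
        rw [integral_const_mul, setIntegral_exp_sum_solidSimplex hr n zero_le_one, mul_one]
    _ ≤ _ := by
        refine setIntegral_mono_on (Continuous.integrableOn_solidSimplex (by fun_prop) 1)
          (Continuous.integrableOn_solidSimplex (by fun_prop) 1) (measurableSet_solidSimplex n 1)
          fun y hy => ?_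
        rw [mul_assoc, ← exp_add]
        gcongr
        exact neg_add_mul_sum_le_sum_sub_mul hBar hBar0 hy

theorem integral_importanceEstimator_pos (hr : 0 < r) (hlam : ∀ i, 0 < lam i) :
    0 < ∫ y, importanceEstimator lam r y ∂Measure.pi (fun _ => expMeasure r) := by
  have hsum i : lam i ≤ ∑ j, lam j :=
    Finset.single_le_sum (fun j _ => (hlam j).le) (Finset.mem_univ i)
  refine lt_of_lt_of_le ?_ (integral_importanceEstimator_ge hr (fun i => (hlam i).le) hsum
    (Finset.sum_nonneg fun i _ => (hlam i).le))
  have := Finset.prod_pos fun i (_ : i ∈ Finset.univ) => div_pos (hlam i) hr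
  positivity

theorem integral_importanceEstimator_sq_le (hr : 0 < r) {lamMin : ℝ} (hMin : ∀ i, lamMin ≤ lam i)
    (h2 : 2 * lamMin ≤ r) :
    ∫ y, importanceEstimator lam r y ^ 2 ∂Measure.pi (fun _ => expMeasure r) ≤
      (∏ i, lam i / r) ^ 2 * exp (r - 2 * lamMin) * (r ^ n / n !) := by
  have := isProbabilityMeasure_expMeasure hr
  rw [integral_congr_ae (sq_importanceEstimator_ae_eq hr),
    integral_indicator (measurableSet_solidSimplex n 1)]
  calc _ ≤ ∫ y in solidSimplex n 1, (∏ i, lam i / r) ^ 2 * exp (r - 2 * lamMin) *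
          exp (r * ∑ i, y i) ∂Measure.pi (fun _ => expMeasure r) := by
        refine setIntegral_mono_on (Continuous.integrableOn_solidSimplex (by fun_prop) 1)
          (Continuous.integrableOn_solidSimplex (by fun_prop) 1) (measurableSet_solidSimplex n 1)
          fun y hy => ?_
        rw [mul_pow, ← exp_nat_mul, mul_assoc, ← exp_add]
        gcongr
        exact_mod_cast two_mul_sum_sub_mul_le hMin h2 hy
    _ = _ := by
        rw [integral_const_mul, setIntegral_exp_sum_solidSimplex hr n zero_le_one, mul_one]

end Moments

theorem integral_importanceEstimator_sq_le_mul_sq {n : ℕ} (hn : n ≠ 0) {lam : Fin n → ℝ}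
    (hlam : ∀ i, 0 < lam i) {lamBar lamMin : ℝ} (hBar : ∀ i, lam i ≤ lamBar)
    (hMin : ∀ i, lamMin ≤ lam i) (h2 : 2 * lamMin ≤ n) :
    ∫ y, importanceEstimator lam n y ^ 2 ∂Measure.pi (fun _ => expMeasure n) ≤
      √n * exp (2 * (lamBar - lamMin) + 1) *
        (∫ y, importanceEstimator lam n y ∂Measure.pi (fun _ => expMeasure n)) ^ 2 := by
  have hn' : (0 : ℝ) < n := by positivity
  have hBar0 : 0 ≤ lamBar := (hlam ⟨0, Nat.pos_of_ne_zero hn⟩).le.trans (hBar _)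
  set c := ∏ i, lam i / (n : ℝ)
  set V := (n : ℝ) ^ n / (n ! : ℝ)
  have hc : 0 < c := Finset.prod_pos fun i _ => div_pos (hlam i) hn'
  have hstirling : exp (n - 1) ≤ √n * V := by
    have h := factorial_le_exp_one_mul_sqrt_mul_pow hn
    rw [div_pow, ← exp_nat_mul, mul_one] at h
    rw [mul_div_assoc', le_div_iff₀ (by positivity), exp_sub]
    calc exp n / exp 1 * n ! ≤ exp n / exp 1 * (exp 1 * √n * (n ^ n / exp n)) := by gcongr
      _ = √n * n ^ n := by field_simp
  have hexp : exp (n - 2 * lamMin) =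
      exp (-lamBar) ^ 2 * exp (2 * (lamBar - lamMin) + 1) * exp (n - 1) := by
    rw [← exp_nat_mul, ← exp_add, ← exp_add]
    congr 1
    push_cast
    ring
  calc _ ≤ c ^ 2 * exp (n - 2 * lamMin) * V := integral_importanceEstimator_sq_le hn' hMin h2
    _ = (c * exp (-lamBar) * V) ^ 2 * exp (2 * (lamBar - lamMin) + 1) / V * exp (n - 1) := by
        rw [hexp]
        field_simp
    _ ≤ (c * exp (-lamBar) * V) ^ 2 * exp (2 * (lamBar - lamMin) + 1) / V * (√n * V) := by
        gcongr
    _ = √n * exp (2 * (lamBar - lamMin) + 1) * (c * exp (-lamBar) * V) ^ 2 := by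
        field_simp
    _ ≤ _ := by
        gcongr
        exact integral_importanceEstimator_ge hn' (fun i => (hlam i).le) hBar hBar0

section SampleMean

variable {Ω Ω' : Type*} {mΩ : MeasurableSpace Ω} {mΩ' : MeasurableSpace Ω'} {P : Measure Ω}
  {μ : Measure Ω'} {N : ℕ} {Zs : Fin N → Ω → ℝ} {X : Ω' → ℝ}

theorem variance_sampleMean (hZs : ∀ j, IdentDistrib (Zs j) X P μ) (hind : iIndepFun Zs P)
    (hX : MemLp X 2 μ) :
    variance (fun ω => 1 / (N : ℝ) * ∑ j, Zs j ω) P = variance X μ / N := by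
  have hmean : (fun ω => 1 / (N : ℝ) * ∑ j, Zs j ω) = (1 / (N : ℝ)) • ∑ j, Zs j := by
    ext ω
    simp [Finset.sum_apply]
  rw [hmean, variance_smul, IndepFun.variance_sum (fun j _ => (hZs j).symm.memLp_snd hX)
    fun i _ j _ hij => hind.indepFun hij]
  simp only [(hZs _).variance_eq, Finset.sum_const, Finset.card_univ, Fintype.card_fin,
    nsmul_eq_mul]
  field_simp

theorem integral_sampleMean (hN : N ≠ 0) (hZs : ∀ j, IdentDistrib (Zs j) X P μ)
    (hX : Integrable X μ) :
    ∫ ω, 1 / (N : ℝ) * ∑ j, Zs j ω ∂P = ∫ x, X x ∂μ := by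
  rw [integral_const_mul, integral_finsetSum _ fun j _ => (hZs j).symm.integrable_snd hX]
  simp only [(hZs _).integral_eq, Finset.sum_const, Finset.card_univ, Fintype.card_fin,
    nsmul_eq_mul]
  field_simp

theorem sqrt_variance_sampleMean_div_integral_le [IsProbabilityMeasure μ] (hN : N ≠ 0)
    (hZs : ∀ j, IdentDistrib (Zs j) X P μ) (hind : iIndepFun Zs P) (hX : MemLp X 2 μ)
    (hpos : 0 < ∫ x, X x ∂μ) {K : ℝ} (hK : ∫ x, X x ^ 2 ∂μ ≤ K * (∫ x, X x ∂μ) ^ 2) :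
    √(variance (fun ω => 1 / (N : ℝ) * ∑ j, Zs j ω) P) / ∫ ω, 1 / (N : ℝ) * ∑ j, Zs j ω ∂P ≤
      √(K / N) := by
  rw [variance_sampleMean hZs hind hX, integral_sampleMean hN hZs (hX.integrable one_le_two),
    div_le_iff₀ hpos]
  have hvar : variance X μ ≤ K * (∫ x, X x ∂μ) ^ 2 :=
    (variance_le_expectation_sq hX.aestronglyMeasurable).trans hK
  calc √(variance X μ / N) ≤ √(K / N * (∫ x, X x ∂μ) ^ 2) := by
        rw [div_mul_eq_mul_div]
        gcongr
    _ = √(K / N) * ∫ x, X x ∂μ := by rw [sqrt_mul' _ (sq_nonneg _), sqrt_sq hpos.le]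

end SampleMean

theorem is_algorithm_relative_error_general
    {Ω : Type*} [MeasureSpace Ω]
    (n : ℕ) (hn : 1 ≤ n) (lam : Fin n → ℝ) (hlam : ∀ i, 0 < lam i)
    (lamBar lamMin : ℝ)
    (hBar : IsGreatest (Set.range lam) lamBar)
    (hMin : IsLeast (Set.range lam) lamMin)
    (h2 : 2 * lamMin < n)
    (Y : Fin n → Ω → ℝ)
    (hYmeas : ∀ i, Measurable (Y i))
    (hYindep : iIndepFun Y ℙ)
    (hYdist : ∀ i, Measure.map (Y i) ℙ = expMeasure n)
    (Z : Ω → ℝ)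
    (hZ : Z = fun ω => (if ∑ i, Y i ω ≤ 1 then (1 : ℝ) else 0) *
      ∏ i, (lam i * Real.exp (-(lam i) * Y i ω)) / ((n : ℝ) * Real.exp (-(n : ℝ) * Y i ω)))
    (N : ℕ) (hN : 1 ≤ N)
    (Zs : Fin N → Ω → ℝ)
    (hZsmeas : ∀ j, Measurable (Zs j))
    (hZsindep : iIndepFun Zs ℙ)
    (hZsdist : ∀ j, Measure.map (Zs j) ℙ = Measure.map Z ℙ)
    (ellHat : Ω → ℝ)
    (hellHat : ellHat = fun ω => (1 / (N : ℝ)) * ∑ j, Zs j ω)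
    (RE : ℝ)
    (hRE : RE = Real.sqrt (variance ellHat ℙ) / (∫ ω, ellHat ω ∂ℙ)) :
    RE ≤ Real.sqrt (Real.sqrt n * Real.exp (2 * (lamBar - lamMin) + 1) / N) := by
  have hr : (0 : ℝ) < n := Nat.cast_pos.2 hn
  have := isProbabilityMeasure_expMeasure hr
  have hYlaw : IdentDistrib (fun ω i => Y i ω) id ℙ (Measure.pi fun _ => expMeasure n) :=
    ⟨(measurable_pi_lambda _ hYmeas).aemeasurable, aemeasurable_id, by
      simp [hYindep.map_fun_eq_pi_map fun i => (hYmeas i).aemeasurable, hYdist]⟩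
  have hZlaw : IdentDistrib Z (importanceEstimator lam n) ℙ (Measure.pi fun _ => expMeasure n) :=
    hZ ▸ hYlaw.comp (measurable_importanceEstimator lam n)
  have hZslaw j :
      IdentDistrib (Zs j) (importanceEstimator lam n) ℙ (Measure.pi fun _ => expMeasure n) :=
    IdentDistrib.trans ⟨(hZsmeas j).aemeasurable, hZlaw.aemeasurable_fst, hZsdist j⟩ hZlaw
  subst hRE hellHat
  exact sqrt_variance_sampleMean_div_integral_le (Nat.one_le_iff_ne_zero.1 hN) hZslaw hZsindep
    (memLp_importanceEstimator hr) (integral_importanceEstimator_pos hr hlam)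
    (integral_importanceEstimator_sq_le_mul_sq (Nat.one_le_iff_ne_zero.1 hn) hlam
      (fun i => hBar.2 ⟨i, rfl⟩) (fun i => hMin.2 ⟨i, rfl⟩) h2.le)

/-- **Bounded relative error of the importance-sampling algorithm.**
If `Zs 1, …, Zs N` are i.i.d. copies of the estimator
`Z = 1_{∑ Yᵢ ≤ 1} · ∏ (lamᵢ e^{-lamᵢ Yᵢ}) / (n e^{-n Yᵢ})` (with `Y i ~ Exp(n)` i.i.d.),
and `ℓhat` is their sample mean, then the relative error
`RE = √(Var ℓhat) / E[ℓhat]` satisfies `RE ≤ √(√n e^{2(lamBar - lamMin) + 1} / N)`. -/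
theorem is_algorithm_relative_error
    {Ω : Type*} [MeasureSpace Ω] [IsProbabilityMeasure (ℙ : Measure Ω)]
    (n : ℕ) (hn : 1 ≤ n) (lam : Fin n → ℝ) (hlam : ∀ i, 0 < lam i)
    (lamBar lamMin : ℝ)
    (hBar : IsGreatest (Set.range lam) lamBar)
    (hMin : IsLeast (Set.range lam) lamMin)
    (h2 : 2 * lamMin < n)
    (Y : Fin n → Ω → ℝ)
    (hYmeas : ∀ i, Measurable (Y i))
    (hYindep : iIndepFun Y ℙ)
    (hYdist : ∀ i, Measure.map (Y i) ℙ = expMeasure n)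
    (Z : Ω → ℝ)
    (hZ : Z = fun ω => (if ∑ i, Y i ω ≤ 1 then (1 : ℝ) else 0) *
      ∏ i, (lam i * Real.exp (-(lam i) * Y i ω)) / ((n : ℝ) * Real.exp (-(n : ℝ) * Y i ω)))
    (N : ℕ) (hN : 1 ≤ N)
    (Zs : Fin N → Ω → ℝ)
    (hZsmeas : ∀ j, Measurable (Zs j))
    (hZsindep : iIndepFun Zs ℙ)
    (hZsdist : ∀ j, Measure.map (Zs j) ℙ = Measure.map Z ℙ)
    (ellHat : Ω → ℝ)
    (hellHat : ellHat = fun ω => (1 / (N : ℝ)) * ∑ j, Zs j ω)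
    (RE : ℝ)
    (hRE : RE = Real.sqrt (variance ellHat ℙ) / (∫ ω, ellHat ω ∂ℙ)) :
    RE ≤ Real.sqrt (Real.sqrt n * Real.exp (2 * (lamBar - lamMin) + 1) / N) :=
  is_algorithm_relative_error_general n hn lam hlam lamBar lamMin hBar hMin h2 Y hYmeas hYindep
    hYdist Z hZ N hN Zs hZsmeas hZsindep hZsdist ellHat hellHat RE hRE
end

section
/- Let $n \geq 1$ and let $\lambda_1,\dots,\lambda_n > 0$ with $\bar{\lambda} = \max_i \lambda_i$. Let $Y_1,\dots,Y_n$ be i.i.d. exponential random variables with rate $n$ and set $Z = \mathbf{1}_{\{\sum_{i=1}^n Y_i \leq 1\}} \cdot \prod_{i=1}^n \frac{\lambda_i e^{-\lambda_i Y_i}}{n e^{-n Y_i}}$. Then $\mathbb{E}[Z] \geq \frac{\prod_{i=1}^n \lambda_i}{n^n} \cdot \frac{n^{n}}{(n-1)!} \cdot \frac{1}{\bar{\lambda}^n} \cdot \gamma(n, \bar{\lambda})$, where $\gamma(n,x) = \int_0^x t^{n-1}e^{-t}\,dt$ is the lower incomplete gamma function. -/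
/-! Under the change of measure the estimator is the likelihood ratio `∏ (λᵢ/n) e^{(n-λᵢ)Yᵢ}`
restricted to the simplex `∑ Yᵢ ≤ 1`. Since `λᵢ ≤ λ̄` and `Yᵢ ≥ 0`, it dominates
`(∏ λᵢ / nⁿ) e^{(n-λ̄) S}` on `{S ≤ 1}`, where `S = ∑ Yᵢ`. Gamma densities of a common rate are
closed under convolution with the exponential density, so `S ~ Gamma(n, n)` and the expectation of
the lower bound is `(∏ λᵢ / nⁿ) · nⁿ/(n-1)! · ∫₀¹ s^{n-1} e^{-λ̄ s} ds`; the substitution `t = λ̄ s`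
turns the last integral into `γ(n, λ̄) / λ̄ⁿ`. -/

open MeasureTheory ProbabilityTheory Real Set
open scoped ENNReal Nat

namespace ProbabilityTheory

lemma measurable_gammaPDF (a r : ℝ) : Measurable (gammaPDF a r) :=
  (measurable_gammaPDFReal a r).ennreal_ofReal

lemma ae_nonneg_gammaMeasure (a r : ℝ) : ∀ᵐ x ∂gammaMeasure a r, 0 ≤ x := by
  rw [ae_iff, show {x : ℝ | ¬0 ≤ x} = Iio 0 by ext; simp, gammaMeasure,
    withDensity_apply _ measurableSet_Iio]
  exact lintegral_gammaPDF_of_nonpos le_rfl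

lemma gammaPDF_mul_exponentialPDF_neg_add {a r : ℝ} (hr : 0 < r) (x y : ℝ) :
    gammaPDF a r y * exponentialPDF r (-y + x)
      = (Icc 0 x).indicator
          (fun y => ENNReal.ofReal (r ^ (a + 1) / Gamma a * exp (-(r * x)) * y ^ (a - 1))) y := by
  by_cases hy0 : 0 ≤ y
  · by_cases hyx : y ≤ x
    · rw [indicator_of_mem (show y ∈ Icc 0 x from ⟨hy0, hyx⟩), gammaPDF_of_nonneg hy0,
        exponentialPDF_of_nonneg (by linarith), ← ENNReal.ofReal_mul' (by positivity)]
      congr 1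
      have : exp (-(r * y)) * exp (-(r * (-y + x))) = exp (-(r * x)) := by
        rw [← exp_add]; ring_nf
      simp only [rpow_add hr, rpow_one, ← this]
      ring
    · rw [indicator_of_notMem (fun h => hyx h.2), exponentialPDF_of_neg (by linarith), mul_zero]
  · rw [indicator_of_notMem (fun h => hy0 h.1), gammaPDF_of_neg (not_le.mp hy0), zero_mul]

lemma lconvolution_gammaPDF_exponentialPDF {a r : ℝ} (ha : 0 < a) (hr : 0 < r) (x : ℝ) :
    (gammaPDF a r ⋆ₗ exponentialPDF r) x = gammaPDF (a + 1) r x := by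
  simp_rw [lconvolution_def, gammaPDF_mul_exponentialPDF_neg_add hr]
  rcases lt_or_ge x 0 with hx | hx
  · simp [Icc_eq_empty_of_lt hx, gammaPDF_of_neg hx]
  set C := r ^ (a + 1) / Gamma a * exp (-(r * x))
  have hint : IntegrableOn (fun y => C * y ^ (a - 1)) (Icc 0 x) := by
    rw [integrableOn_Icc_iff_integrableOn_Ioc, ← intervalIntegrable_iff_integrableOn_Ioc_of_le hx]
    exact (intervalIntegral.intervalIntegrable_rpow' (by linarith)).const_mul C
  rw [lintegral_indicator measurableSet_Icc, ← ofReal_integral_eq_lintegral_ofReal hint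
      ((ae_restrict_iff' measurableSet_Icc).2 (.of_forall fun y hy =>
        mul_nonneg (by positivity) (rpow_nonneg hy.1 _))),
    integral_Icc_eq_integral_Ioc, ← intervalIntegral.integral_of_le hx,
    intervalIntegral.integral_const_mul, integral_rpow (Or.inl (by linarith)),
    gammaPDF_of_nonneg hx, Gamma_add_one ha.ne']
  congr 1
  simp only [C, sub_add_cancel, add_sub_cancel_right, zero_rpow ha.ne', sub_zero]
  field_simp

lemma gammaMeasure_conv_expMeasure {a r : ℝ} (ha : 0 < a) (hr : 0 < r) :
    gammaMeasure a r ∗ expMeasure r = gammaMeasure (a + 1) r := by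
  rw [expMeasure, gammaMeasure, gammaMeasure, gammaMeasure,
    conv_withDensity_eq_lconvolution (measurable_gammaPDF a r) (measurable_gammaPDF 1 r)]
  congr 1
  funext x
  exact lconvolution_gammaPDF_exponentialPDF ha hr x

lemma iIndepFun.hasLaw_sum_gammaMeasure {ι Ω : Type*} [MeasurableSpace Ω] {P : Measure Ω}
    {Y : ι → Ω → ℝ} {r : ℝ} (hr : 0 < r) (hY : ∀ i, HasLaw (Y i) (expMeasure r) P)
    (hind : iIndepFun Y P) {s : Finset ι} (hs : s.Nonempty) :
    HasLaw (fun ω => ∑ i ∈ s, Y i ω) (gammaMeasure s.card r) P := by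
  classical
  induction hs using Finset.Nonempty.cons_induction with
  | singleton j => simpa [expMeasure] using hY j
  | cons j s hj hs ih =>
    have := isProbabilityMeasure_gammaMeasure (a := s.card) (by positivity) hr
    have := isProbabilityMeasure_expMeasure hr
    have hindep : IndepFun (fun ω => ∑ i ∈ s, Y i ω) (Y j) P := by
      simpa only [Finset.sum_fn] using
        hind.indepFun_finsetSum_of_notMem₀ (fun i => (hY i).aemeasurable) hj
    have hlaw := hindep.hasLaw_fun_add ih (hY j)
    rw [gammaMeasure_conv_expMeasure (by positivity) hr] at hlaw
    rw [Finset.card_cons, Nat.cast_succ]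
    convert hlaw using 2 with ω
    rw [Finset.sum_cons, add_comm]

lemma integral_indicator_Iic_exp_gammaMeasure {r : ℝ} (hr : 0 < r) (m : ℕ) {b : ℝ} (hb : 0 ≤ b)
    (c : ℝ) :
    ∫ x, (Iic b).indicator (fun x => exp (c * x)) x ∂gammaMeasure (m + 1) r
      = r ^ (m + 1) / m ! * ∫ x in 0..b, x ^ m * exp (-((r - c) * x)) := by
  rw [gammaMeasure, integral_withDensity_eq_integral_toReal_smul (measurable_gammaPDF _ r)
    (.of_forall fun _ => ENNReal.ofReal_lt_top)]
  have hpt : ∀ x, (gammaPDF (m + 1) r x).toReal • (Iic b).indicator (fun x => exp (c * x)) x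
      = (Icc 0 b).indicator (fun x => r ^ (m + 1) / m ! * (x ^ m * exp (-((r - c) * x)))) x := by
    intro x
    by_cases hx0 : 0 ≤ x
    · rw [gammaPDF_of_nonneg hx0, ENNReal.toReal_ofReal (by positivity), smul_eq_mul]
      by_cases hxb : x ≤ b
      · rw [indicator_of_mem (show x ∈ Iic b from hxb),
          indicator_of_mem (show x ∈ Icc 0 b from ⟨hx0, hxb⟩)]
        have : exp (-(r * x)) * exp (c * x) = exp (-((r - c) * x)) := by
          rw [← exp_add]; ring_nf
        rw [← this, add_sub_cancel_right, Gamma_nat_eq_factorial, rpow_natCast,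
          show (m : ℝ) + 1 = ((m + 1 : ℕ) : ℝ) by push_cast; ring, rpow_natCast]
        ring
      · rw [indicator_of_notMem (show x ∉ Iic b from hxb),
          indicator_of_notMem (fun h => hxb h.2), mul_zero]
    · rw [gammaPDF_of_neg (not_le.mp hx0), indicator_of_notMem (s := Icc 0 b) (fun h => hx0 h.1)]
      simp
  simp_rw [hpt]
  rw [integral_indicator measurableSet_Icc, integral_Icc_eq_integral_Ioc,
    ← intervalIntegral.integral_of_le hb, intervalIntegral.integral_const_mul]

end ProbabilityTheory

lemma intervalIntegral.integral_pow_mul_exp_neg_eq_rescaled (m : ℕ) (c : ℝ) :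
    ∫ t in 0..c, t ^ m * exp (-t) = c ^ (m + 1) * ∫ s in 0..1, s ^ m * exp (-(c * s)) := by
  have h := intervalIntegral.smul_integral_comp_mul_left (a := 0) (b := 1)
    (fun t => t ^ m * exp (-t)) c
  simp only [smul_eq_mul, mul_zero, mul_one] at h
  rw [← h, ← intervalIntegral.integral_const_mul, ← intervalIntegral.integral_const_mul]
  congr 1
  funext s
  ring

section LikelihoodRatio

variable {ι : Type*} [Fintype ι]

noncomputable def truncatedLikelihoodRatio (c : ℝ) (lam y : ι → ℝ) : ℝ :=
  (if ∑ i, y i ≤ 1 then (1 : ℝ) else 0) *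
    ∏ i, (lam i * exp (-(lam i) * y i)) / (c * exp (-c * y i))

lemma measurable_truncatedLikelihoodRatio (c : ℝ) (lam : ι → ℝ) :
    Measurable (truncatedLikelihoodRatio c lam) :=
  (Measurable.ite (measurableSet_le (by fun_prop) measurable_const)
    measurable_const measurable_const).mul (by fun_prop)

lemma prod_likelihoodRatio_eq (c : ℝ) (lam y : ι → ℝ) :
    ∏ i, (lam i * exp (-(lam i) * y i)) / (c * exp (-c * y i))
      = (∏ i, lam i) / c ^ Fintype.card ι * exp (∑ i, (c - lam i) * y i) := by
  rw [exp_sum, ← Finset.card_univ, ← Finset.prod_const, ← Finset.prod_div_distrib,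
    ← Finset.prod_mul_distrib]
  refine Finset.prod_congr rfl fun i _ => ?_
  rw [mul_div_mul_comm, ← exp_sub]
  ring_nf

variable {c : ℝ} {lam : ι → ℝ}

lemma le_truncatedLikelihoodRatio {lamBar : ℝ} {y : ι → ℝ} (hc : 0 ≤ c)
    (hlam : ∀ i, 0 ≤ lam i) (hle : ∀ i, lam i ≤ lamBar) (hy : ∀ i, 0 ≤ y i) :
    (∏ i, lam i) / c ^ Fintype.card ι *
        (Iic 1).indicator (fun s => exp ((c - lamBar) * s)) (∑ i, y i)
      ≤ truncatedLikelihoodRatio c lam y := by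
  have hK : 0 ≤ (∏ i, lam i) / c ^ Fintype.card ι :=
    div_nonneg (Finset.prod_nonneg fun i _ => hlam i) (pow_nonneg hc _)
  unfold truncatedLikelihoodRatio
  by_cases hs : ∑ i, y i ≤ 1
  · rw [indicator_of_mem (show ∑ i, y i ∈ Iic 1 from hs), if_pos hs, one_mul,
      prod_likelihoodRatio_eq, Finset.mul_sum]
    gcongr _ * exp ?_
    exact Finset.sum_le_sum fun i _ => mul_le_mul_of_nonneg_right (by linarith [hle i]) (hy i)
  · rw [indicator_of_notMem (show ∑ i, y i ∉ Iic 1 from hs), if_neg hs]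
    simp

lemma norm_truncatedLikelihoodRatio_le {y : ι → ℝ} (hc : 0 ≤ c) (hlam : ∀ i, 0 ≤ lam i)
    (hy : ∀ i, 0 ≤ y i) :
    ‖truncatedLikelihoodRatio c lam y‖ ≤ (∏ i, lam i) / c ^ Fintype.card ι * exp c := by
  have hK : 0 ≤ (∏ i, lam i) / c ^ Fintype.card ι :=
    div_nonneg (Finset.prod_nonneg fun i _ => hlam i) (pow_nonneg hc _)
  unfold truncatedLikelihoodRatio
  by_cases hs : ∑ i, y i ≤ 1
  · rw [if_pos hs, one_mul, prod_likelihoodRatio_eq, norm_of_nonneg (by positivity)]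
    gcongr
    calc ∑ i, (c - lam i) * y i ≤ ∑ i, c * y i :=
          Finset.sum_le_sum fun i _ => mul_le_mul_of_nonneg_right (by linarith [hlam i]) (hy i)
      _ = c * ∑ i, y i := (Finset.mul_sum _ _ _).symm
      _ ≤ c := mul_le_of_le_one_right hc hs
  · rw [if_neg hs, zero_mul, norm_zero]
    positivity

lemma integrable_truncatedLikelihoodRatio_comp {Ω : Type*} [MeasurableSpace Ω] {P : Measure Ω}
    [IsFiniteMeasure P] {X : Ω → ι → ℝ} (hX : Measurable X) (hc : 0 ≤ c)
    (hlam : ∀ i, 0 ≤ lam i) (hX_nonneg : ∀ᵐ ω ∂P, ∀ i, 0 ≤ X ω i) :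
    Integrable (fun ω => truncatedLikelihoodRatio c lam (X ω)) P :=
  .of_bound ((measurable_truncatedLikelihoodRatio c lam).comp hX).aestronglyMeasurable _
    (hX_nonneg.mono fun _ hω => norm_truncatedLikelihoodRatio_le hc hlam hω)

lemma mul_integral_le_integral_truncatedLikelihoodRatio {Ω : Type*} [MeasurableSpace Ω]
    {P : Measure Ω} [IsFiniteMeasure P] {lamBar : ℝ} {X : Ω → ι → ℝ} (hX : Measurable X)
    (hc : 0 ≤ c) (hlam : ∀ i, 0 ≤ lam i) (hle : ∀ i, lam i ≤ lamBar)
    (hX_nonneg : ∀ᵐ ω ∂P, ∀ i, 0 ≤ X ω i) :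
    (∏ i, lam i) / c ^ Fintype.card ι *
        ∫ ω, (Iic 1).indicator (fun s => exp ((c - lamBar) * s)) (∑ i, X ω i) ∂P
      ≤ ∫ ω, truncatedLikelihoodRatio c lam (X ω) ∂P := by
  rw [← integral_const_mul]
  refine integral_mono_of_nonneg (.of_forall fun ω => ?_)
    (integrable_truncatedLikelihoodRatio_comp hX hc hlam hX_nonneg)
    (hX_nonneg.mono fun ω hω => le_truncatedLikelihoodRatio hc hlam hle hω)
  exact mul_nonneg (div_nonneg (Finset.prod_nonneg fun i _ => hlam i) (pow_nonneg hc _))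
    (indicator_nonneg (fun _ _ => (exp_pos _).le) _)

end LikelihoodRatio

/-- **Lower bound on the first moment of the importance-sampling estimator.**
If `Y i ~ Exp(n)` are i.i.d., `lamBar = max lamᵢ`, and
`Z = 1_{∑ Yᵢ ≤ 1} · ∏ (lamᵢ e^{-lamᵢ Yᵢ}) / (n e^{-n Yᵢ})`, then
`E[Z] ≥ (∏ lamᵢ / nⁿ) · nⁿ/(n-1)! · 1/lamBarⁿ · γ(n, lamBar)`,
where `γ(n,x) = ∫₀ˣ tⁿ⁻¹ e⁻ᵗ dt` is the lower incomplete gamma function. -/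
theorem is_estimator_first_moment_bound
    {Ω : Type*} [MeasureSpace Ω] [IsProbabilityMeasure (ℙ : Measure Ω)]
    (n : ℕ) (hn : 1 ≤ n) (lam : Fin n → ℝ) (hlam : ∀ i, 0 < lam i)
    (lamBar : ℝ)
    (hBar : IsGreatest (Set.range lam) lamBar)
    (Y : Fin n → Ω → ℝ)
    (hYmeas : ∀ i, Measurable (Y i))
    (hYindep : iIndepFun Y ℙ)
    (hYdist : ∀ i, Measure.map (Y i) ℙ = expMeasure n)
    (Z : Ω → ℝ)
    (hZ : Z = fun ω => (if ∑ i, Y i ω ≤ 1 then (1 : ℝ) else 0) *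
      ∏ i, (lam i * Real.exp (-(lam i) * Y i ω)) / ((n : ℝ) * Real.exp (-(n : ℝ) * Y i ω))) :
    ((∏ i, lam i) / (n : ℝ) ^ n) * ((n : ℝ) ^ n / (Nat.factorial (n - 1) : ℝ)) *
        (1 / lamBar ^ n) * (∫ t in (0 : ℝ)..lamBar, t ^ (n - 1) * Real.exp (-t)) ≤
      ∫ ω, Z ω ∂ℙ := by
  obtain ⟨m, rfl⟩ : ∃ m, n = m + 1 := ⟨n - 1, by omega⟩
  obtain ⟨i₀, hi₀⟩ := hBar.1
  have hlamBar : 0 < lamBar := hi₀ ▸ hlam i₀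
  set r : ℝ := ((m + 1 : ℕ) : ℝ)
  have hr : 0 < r := by positivity
  have hY : ∀ i, HasLaw (Y i) (expMeasure r) ℙ := fun i => ⟨(hYmeas i).aemeasurable, hYdist i⟩
  have hS : HasLaw (fun ω => ∑ i, Y i ω) (gammaMeasure (m + 1) r) ℙ := by
    simpa using hYindep.hasLaw_sum_gammaMeasure hr hY Finset.univ_nonempty
  have hY_nonneg : ∀ᵐ ω ∂ℙ, ∀ i, 0 ≤ Y i ω := ae_all_iff.2 fun i =>
    ae_of_ae_map (hY i).aemeasurable ((hY i).map_eq ▸ ae_nonneg_gammaMeasure 1 r)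
  have hES : ∫ ω, (Iic 1).indicator (fun s => exp ((r - lamBar) * s)) (∑ i, Y i ω) ∂ℙ
      = r ^ (m + 1) / m ! * ∫ s in 0..1, s ^ m * exp (-(lamBar * s)) := by
    have := hS.integral_comp (f := (Iic 1).indicator fun s => exp ((r - lamBar) * s))
      (Measurable.indicator (by fun_prop) measurableSet_Iic).aestronglyMeasurable
    rwa [integral_indicator_Iic_exp_gammaMeasure hr m zero_le_one, sub_sub_cancel] at this
  have hZ' : Z = fun ω => truncatedLikelihoodRatio r lam (Y · ω) := hZ
  calc _ = (∏ i, lam i) / r ^ (m + 1) *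
        ∫ ω, (Iic 1).indicator (fun s => exp ((r - lamBar) * s)) (∑ i, Y i ω) ∂ℙ := by
        rw [hES, Nat.add_sub_cancel, intervalIntegral.integral_pow_mul_exp_neg_eq_rescaled]
        field_simp
    _ ≤ ∫ ω, Z ω ∂ℙ := by
        simpa [hZ'] using mul_integral_le_integral_truncatedLikelihoodRatio
          (measurable_pi_lambda _ hYmeas) hr.le (fun i => (hlam i).le) (fun i => hBar.2 ⟨i, rfl⟩)
          hY_nonneg
end
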